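/- Let u be a convex function on a bounded convex open set Ω ⊂ ℝⁿ, continuous up to the boundary with u = 0 on ∂Ω, whose Monge–Ampère measure satisfies Mu ≤ Lebesgue measure (i.e. |∂u(E)| ≤ |E| for all Borel E ⊂ Ω). Then |Ω| ≥ c(n) |min_Ω u|^{n/2} for a dimensional constant c(n) > 0. -/

import Mathlib

open MeasureTheory

/-- The subgradient of a convex function `u` (relative to the domain `Ω`) at `x`. -/
def subgrad {n : ℕ} (u : EuclideanSpace ℝ (Fin n) → ℝ) (Ω : Set (EuclideanSpace ℝ (Fin n)))
    (x : EuclideanSpace ℝ (Fin n)) : Set (EuclideanSpace ℝ (Fin n)) :=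
  {p | ∀ y ∈ Ω, u x + (inner ℝ p (y - x) : ℝ) ≤ u y}

/-- The subgradient image `∂u(s)` of a set `s`. -/
def subgradImage {n : ℕ} (u : EuclideanSpace ℝ (Fin n) → ℝ) (Ω : Set (EuclideanSpace ℝ (Fin n)))
    (s : Set (EuclideanSpace ℝ (Fin n))) : Set (EuclideanSpace ℝ (Fin n)) :=
  ⋃ x ∈ s, subgrad u Ω x


/-!
Let `x₀` minimize `u` and `m = -u x₀ ≥ 0`. Choose `w₁, …, wₙ ∈ closure Ω` maximizing
`|det (wᵢ - x₀)|`; by Cramer's rule every `y - x₀` with `y ∈ closure Ω` has coordinates in `[-1, 1]`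
in the basis `bᵢ = wᵢ - x₀`. Hence for every `p` with `∑ |⟪p, bᵢ⟫| ≤ m`, the plane through
`(x₀, u x₀)` of slope `p` lies below `u` on `∂Ω`; sliding it up until it touches the graph of `u`
shows `p ∈ ∂u(Ω)`. This polar cross-polytope has volume `mⁿ |cross| / |det b|`, while by convexity
`closure Ω` contains the simplex `x₀ + conv {0, bᵢ}` of volume `|det b| |simplex|`. Multiplying,
`mⁿ |cross| |simplex| ≤ |∂u(Ω)| |Ω| ≤ |Ω|²`.
-/

open Module Filter Topology Pointwise

-- Cramer's rule: replacing `v i` by `y` multiplies the determinant by the `i`-th coordinate of `y`.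
theorem Module.Basis.abs_mk_repr_le_one_of_isMaxOn {E ι : Type*} [AddCommGroup E] [Module ℝ E]
    [Fintype ι] [DecidableEq ι] (e : Basis ι ℝ E) {K : Set E} {v : ι → E}
    (hli : LinearIndependent ℝ v) (hsp : ⊤ ≤ Submodule.span ℝ (Set.range v))
    (hv : v ∈ Set.univ.pi fun _ => K)
    (hmax : IsMaxOn (fun v => |e.det v|) (Set.univ.pi fun _ => K) v)
    {y : E} (hy : y ∈ K) (i : ι) : |(Basis.mk hli hsp).repr y i| ≤ 1 := by
  have hdet : e.det v * (Basis.mk hli hsp).repr y i = e.det (Function.update v i y) := by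
    simpa using LinearMap.congr_fun (e.det_smul_mk_coord_eq_det_update hli hsp i) y
  have hupdate : Function.update v i y ∈ Set.univ.pi fun _ => K := by
    intro j _
    rcases eq_or_ne j i with rfl | hj
    · simpa using hy
    · simpa [Function.update_of_ne hj] using hv j trivial
  have hpos : 0 < |e.det v| := abs_pos.2 (e.is_basis_iff_det.1 ⟨hli, eq_top_iff.2 hsp⟩).ne_zero
  have hle : |e.det v| * |(Basis.mk hli hsp).repr y i| ≤ |e.det v| * 1 := by
    simpa [← hdet, abs_mul] using hmax hupdate
  exact le_of_mul_le_mul_left hle hpos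

section Frame
variable {E ι : Type*} [NormedAddCommGroup E] [NormedSpace ℝ E] [FiniteDimensional ℝ E]
  [Fintype ι] [DecidableEq ι]

theorem Module.Basis.continuous_det (e : Basis ι ℝ E) : Continuous fun v : ι → E => e.det v := by
  simp only [e.det_apply]
  exact Continuous.matrix_det (continuous_matrix fun i j =>
    (e.coord i).continuous_of_finiteDimensional.comp (continuous_apply j))

theorem exists_basis_mem_forall_abs_repr_le_one (e : Basis ι ℝ E) {K : Set E}
    (hK : IsCompact K) (h0 : K ∈ 𝓝 0) :
    ∃ b : Basis ι ℝ E, (∀ i, b i ∈ K) ∧ ∀ y ∈ K, ∀ i, |b.repr y i| ≤ 1 := by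
  obtain ⟨v, hv, hmax⟩ := (isCompact_univ_pi fun _ : ι => hK).exists_isMaxOn
    ⟨fun _ => 0, fun _ _ => mem_of_mem_nhds h0⟩ (e.continuous_det.abs.continuousOn)
  have hsmall : ∀ᶠ ε in 𝓝[>] (0 : ℝ), ∀ i, ε • e i ∈ K := by
    refine eventually_all.2 fun i => ?_
    have : Tendsto (fun ε : ℝ => ε • e i) (𝓝[>] 0) (𝓝 0) :=
      ((continuous_id.smul continuous_const).tendsto' 0 0 (zero_smul ℝ _)).mono_left
        nhdsWithin_le_nhds
    exact this h0
  obtain ⟨ε, hεK, hε⟩ := (hsmall.and self_mem_nhdsWithin).exists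
  have hdet : e.det v ≠ 0 := by
    have hle := hmax (show (fun i => ε • e i) ∈ Set.univ.pi fun _ => K from fun i _ => hεK i)
    simp only [Set.mem_ofPred_eq, AlternatingMap.map_smul_univ, e.det_self, smul_eq_mul,
      mul_one, Finset.prod_const] at hle
    have : 0 < |ε ^ (Finset.univ : Finset ι).card| := abs_pos.2 (pow_pos hε _).ne'
    exact abs_pos.1 (this.trans_le hle)
  obtain ⟨hli, hsp⟩ := e.is_basis_iff_det.2 (isUnit_iff_ne_zero.2 hdet)
  refine ⟨Basis.mk hli hsp.ge, fun i => by simpa using hv i trivial, fun y hy i => ?_⟩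
  exact e.abs_mk_repr_le_one_of_isMaxOn hli hsp.ge hv hmax hy i

end Frame

section Polytopes
variable {ι : Type*} [Fintype ι]

def crossPolytope (ι : Type*) [Fintype ι] : Set (EuclideanSpace ℝ ι) := {t | ∑ i, |t i| ≤ 1}

def cornerSimplex (ι : Type*) [Fintype ι] : Set (EuclideanSpace ℝ ι) :=
  {t | (∀ i, 0 ≤ t i) ∧ ∑ i, t i ≤ 1}

theorem cornerSimplex_subset_crossPolytope : cornerSimplex ι ⊆ crossPolytope ι := fun t ht => by
  simpa [crossPolytope, abs_of_nonneg (ht.1 _)] using ht.2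

theorem EuclideanSpace.norm_le_sum_norm (t : EuclideanSpace ℝ ι) : ‖t‖ ≤ ∑ i, ‖t i‖ :=
  calc ‖t‖ = √(∑ i, ‖t i‖ ^ 2) := EuclideanSpace.norm_eq t
    _ ≤ √((∑ i, ‖t i‖) ^ 2) :=
      Real.sqrt_le_sqrt (Finset.sum_sq_le_sq_sum_of_nonneg fun _ _ => norm_nonneg _)
    _ = ∑ i, ‖t i‖ := Real.sqrt_sq (Finset.sum_nonneg fun _ _ => norm_nonneg _)

theorem crossPolytope_subset_closedBall : crossPolytope ι ⊆ Metric.closedBall 0 1 := fun t ht => by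
  rw [mem_closedBall_zero_iff]
  exact (EuclideanSpace.norm_le_sum_norm t).trans (by simpa [crossPolytope] using ht)

theorem volume_crossPolytope_lt_top : volume (crossPolytope ι) < ⊤ :=
  (measure_mono crossPolytope_subset_closedBall).trans_lt measure_closedBall_lt_top

theorem volume_cornerSimplex_lt_top : volume (cornerSimplex ι) < ⊤ :=
  (measure_mono cornerSimplex_subset_crossPolytope).trans_lt volume_crossPolytope_lt_top

theorem volume_cornerSimplex_pos : 0 < volume (cornerSimplex ι) := by
  let U : Set (EuclideanSpace ℝ ι) := (⋂ i, {t | 0 < t i}) ∩ {t | ∑ i, t i < 1}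
  have hU : IsOpen U := by
    refine (isOpen_iInter_of_finite fun i => isOpen_lt continuous_const ?_).inter
      (isOpen_lt ?_ continuous_const) <;> fun_prop
  have hUne : U.Nonempty := by
    refine ⟨WithLp.toLp 2 fun _ => 1 / (Fintype.card ι + 1), ?_, ?_⟩
    · exact Set.mem_iInter.2 fun _ => show (0 : ℝ) < 1 / (Fintype.card ι + 1) by positivity
    · simp only [Set.mem_ofPred_eq, Finset.sum_const, Finset.card_univ, nsmul_eq_mul]
      rw [mul_one_div, div_lt_one (by positivity)]
      linarith
  exact (hU.measure_pos volume hUne).trans_le (measure_mono fun t ht =>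
    ⟨fun i => (Set.mem_iInter.1 ht.1 i).le, le_of_lt ht.2⟩)

theorem volume_crossPolytope_pos : 0 < volume (crossPolytope ι) :=
  volume_cornerSimplex_pos.trans_le (measure_mono cornerSimplex_subset_crossPolytope)

variable [DecidableEq ι]

theorem volume_polar_mul_volume_image_cornerSimplex (b : Basis ι ℝ (EuclideanSpace ℝ ι)) :
    volume {p | ∑ i, |inner ℝ p (b i)| ≤ 1}
        * volume ((fun t => ∑ i, t i • b i) '' cornerSimplex ι)
      = volume (crossPolytope ι) * volume (cornerSimplex ι) := by
  set M := (EuclideanSpace.basisFun ι ℝ).toBasis.toMatrix b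
  have hdet : M.det ≠ 0 := by
    rw [← Basis.det_apply]; exact ((EuclideanSpace.basisFun ι ℝ).toBasis.isUnit_det b).ne_zero
  have hpolar : {p | ∑ i, |inner ℝ p (b i)| ≤ 1}
      = Matrix.toEuclideanLin M.transpose ⁻¹' crossPolytope ι := by
    ext p
    simp [crossPolytope, M, Matrix.mulVec, dotProduct, PiLp.inner_apply, mul_comm,
      Basis.toMatrix_apply]
  have himage : (fun t => ∑ i, t i • b i) = Matrix.toEuclideanLin M := by
    ext t j
    simp [M, Matrix.mulVec, dotProduct, mul_comm, Basis.toMatrix_apply]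
  have hdetT : LinearMap.det (Matrix.toEuclideanLin M.transpose) = M.det :=
    (LinearMap.det_toLpLin 2 _).trans M.det_transpose
  have hdetM : LinearMap.det (Matrix.toEuclideanLin M) = M.det := LinearMap.det_toLpLin 2 _
  rw [hpolar, himage, Measure.addHaar_preimage_linearMap _ (hdetT ▸ hdet),
    Measure.addHaar_image_linearMap, hdetT, hdetM, mul_mul_mul_comm,
    ← ENNReal.ofReal_mul (by positivity), abs_inv, inv_mul_cancel₀ (abs_pos.2 hdet).ne',
    ENNReal.ofReal_one, one_mul]

end Polytopes

theorem Convex.add_sum_smul_mem {E ι : Type*} [AddCommGroup E] [Module ℝ E] [Fintype ι]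
    {s : Set E} (hs : Convex ℝ s) {x : E} (hx : x ∈ s) {v : ι → E} (hv : ∀ i, x + v i ∈ s)
    {t : ι → ℝ} (ht₀ : ∀ i, 0 ≤ t i) (ht₁ : ∑ i, t i ≤ 1) : x + ∑ i, t i • v i ∈ s := by
  let w : Option ι → ℝ := fun o => o.elim (1 - ∑ i, t i) t
  let z : Option ι → E := fun o => o.elim x (fun i => x + v i)
  have hmem : ∑ o, w o • z o ∈ s := hs.sum_mem
    (by rintro (_ | i) _ <;> simp [w, ht₀, ht₁]) (by simp [w, Fintype.sum_option])
    (by rintro (_ | i) _ <;> simp [z, hx, hv])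
  convert hmem using 1
  simp only [w, z, Fintype.sum_option, Option.elim, smul_add, Finset.sum_add_distrib,
    ← Finset.sum_smul, sub_smul, one_smul]
  abel

theorem inner_le_one_of_abs_repr_le_one {E ι : Type*} [NormedAddCommGroup E]
    [InnerProductSpace ℝ E] [Fintype ι] (b : Basis ι ℝ E) {q x : E}
    (hq : ∑ i, |inner ℝ q (b i)| ≤ 1)
    (hx : ∀ i, |b.repr x i| ≤ 1) : inner ℝ q x ≤ 1 :=
  calc inner ℝ q x = ∑ i, b.repr x i * inner ℝ q (b i) := by
        conv_lhs => rw [← b.sum_repr x]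
        simp only [inner_sum, real_inner_smul_right]
    _ ≤ ∑ i, |inner ℝ q (b i)| := Finset.sum_le_sum fun i _ =>
        (le_abs_self _).trans (by
          rw [abs_mul]; exact mul_le_of_le_one_left (abs_nonneg _) (hx i))
    _ ≤ 1 := hq

section Aleksandrov
variable {n : ℕ} {Ω : Set (EuclideanSpace ℝ (Fin n))} {u : EuclideanSpace ℝ (Fin n) → ℝ}

theorem mem_subgradImage_of_forall_frontier (hΩ : IsOpen Ω) (hb : Bornology.IsBounded Ω)
    (hu : ContinuousOn u (closure Ω)) {x₀ p : EuclideanSpace ℝ (Fin n)} (hx₀ : x₀ ∈ Ω)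
    (hp : ∀ y ∈ frontier Ω, u x₀ + inner ℝ p (y - x₀) ≤ u y) : p ∈ subgradImage u Ω Ω := by
  let g : EuclideanSpace ℝ (Fin n) → ℝ := fun y => u y - inner ℝ p y
  have hg : ContinuousOn g (closure Ω) := hu.sub (by fun_prop)
  obtain ⟨z, hzΩ, hzmin⟩ := hb.isCompact_closure.exists_isMinOn ⟨x₀, subset_closure hx₀⟩ hg
  -- a minimizer of `u - ⟪p, ·⟫` on `∂Ω` may be replaced by `x₀`
  have hmin : ∃ z ∈ Ω, ∀ y ∈ Ω, g z ≤ g y := by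
    by_cases hz : z ∈ Ω
    · exact ⟨z, hz, fun y hy => hzmin (subset_closure hy)⟩
    · have hzfr : z ∈ frontier Ω := by rw [hΩ.frontier_eq]; exact ⟨hzΩ, hz⟩
      have hx₀z : g x₀ ≤ g z := by
        have := hp z hzfr
        simp only [g, inner_sub_right] at this ⊢; linarith
      exact ⟨x₀, hx₀, fun y hy => hx₀z.trans (hzmin (subset_closure hy))⟩
  obtain ⟨z, hz, hzy⟩ := hmin
  refine Set.mem_biUnion hz fun y hy => ?_
  have := hzy y hy
  simp only [g, inner_sub_right] at this ⊢
  linarith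

theorem ofReal_pow_mul_volume_le_volume_subgradImage_mul_volume (hΩ : IsOpen Ω)
    (hconv : Convex ℝ Ω) (hb : Bornology.IsBounded Ω) (hu : ContinuousOn u (closure Ω))
    (hfr : ∀ y ∈ frontier Ω, 0 ≤ u y) {x₀ : EuclideanSpace ℝ (Fin n)} (hx₀ : x₀ ∈ Ω)
    {m : ℝ} (hm : 0 ≤ m) (hux₀ : u x₀ ≤ -m) :
    ENNReal.ofReal (m ^ n) * (volume (crossPolytope (Fin n)) * volume (cornerSimplex (Fin n)))
      ≤ volume (subgradImage u Ω Ω) * volume Ω := by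
  let K := (· - x₀) '' closure Ω
  have hK : IsCompact K := hb.isCompact_closure.image (by fun_prop)
  have hK0 : K ∈ 𝓝 0 := by
    simpa using (Homeomorph.subRight x₀).isOpenMap.image_mem_nhds
      (mem_of_superset (hΩ.mem_nhds hx₀) subset_closure)
  obtain ⟨b, hbK, hrepr⟩ :=
    exists_basis_mem_forall_abs_repr_le_one (EuclideanSpace.basisFun (Fin n) ℝ).toBasis hK hK0
  let P := {p | ∑ i, |inner ℝ p (b i)| ≤ 1}
  have hP : m • P ⊆ subgradImage u Ω Ω := by
    rintro _ ⟨q, hq, rfl⟩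
    refine mem_subgradImage_of_forall_frontier hΩ hb hu hx₀ fun y hy => ?_
    have := inner_le_one_of_abs_repr_le_one b hq (hrepr _ ⟨y, frontier_subset_closure hy, rfl⟩)
    rw [real_inner_smul_left]
    nlinarith [hfr y hy]
  have hS : x₀ +ᵥ (fun t => ∑ i, t i • b i) '' cornerSimplex (Fin n) ⊆ closure Ω := by
    rintro _ ⟨_, ⟨t, ht, rfl⟩, rfl⟩
    refine hconv.closure.add_sum_smul_mem (subset_closure hx₀) (fun i => ?_) ht.1 ht.2
    obtain ⟨y, hy, hyb⟩ := hbK i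
    rwa [← hyb, add_sub_cancel]
  calc ENNReal.ofReal (m ^ n) * (volume (crossPolytope (Fin n)) * volume (cornerSimplex (Fin n)))
      = volume (m • P) * volume (x₀ +ᵥ (fun t => ∑ i, t i • b i) '' cornerSimplex (Fin n)) := by
        rw [Measure.addHaar_smul_of_nonneg _ hm, finrank_euclideanSpace_fin, measure_vadd,
          mul_assoc, volume_polar_mul_volume_image_cornerSimplex]
    _ ≤ volume (subgradImage u Ω Ω) * volume (closure Ω) :=
        mul_le_mul' (measure_mono hP) (measure_mono hS)
    _ = volume (subgradImage u Ω Ω) * volume Ω := by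
        rw [measure_closure_of_null_frontier (hconv.addHaar_frontier volume)]

end Aleksandrov

theorem stmt_3 (n : ℕ) (hn : 1 ≤ n) :
    ∃ c > (0:ℝ), ∀ (Ω : Set (EuclideanSpace ℝ (Fin n))) (u : EuclideanSpace ℝ (Fin n) → ℝ),
      IsOpen Ω → Convex ℝ Ω → Bornology.IsBounded Ω → Ω.Nonempty →
      ConvexOn ℝ (closure Ω) u → ContinuousOn u (closure Ω) →
      (∀ x ∈ frontier Ω, u x = 0) →
      (∀ E ⊆ Ω, MeasurableSet E → volume (subgradImage u Ω E) ≤ volume E) →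
      c * |sInf (u '' closure Ω)| ^ ((n : ℝ) / 2) ≤ (volume Ω).toReal := by
  have : Nonempty (Fin n) := ⟨⟨0, hn⟩⟩
  set C := (volume (crossPolytope (Fin n))).toReal * (volume (cornerSimplex (Fin n))).toReal
  have hC : 0 < C :=
    mul_pos (ENNReal.toReal_pos volume_crossPolytope_pos.ne' volume_crossPolytope_lt_top.ne)
      (ENNReal.toReal_pos volume_cornerSimplex_pos.ne' volume_cornerSimplex_lt_top.ne)
  refine ⟨√C, Real.sqrt_pos.2 hC, fun Ω u hΩ hconv hb hne _ hu hfr hMA => ?_⟩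
  obtain ⟨x₀, hx₀, hmin⟩ := hb.isCompact_closure.exists_isMinOn hne.closure hu
  rw [IsLeast.csInf_eq ⟨Set.mem_image_of_mem u hx₀, Set.forall_mem_image.2 fun y hy => hmin hy⟩]
  by_cases hx₀Ω : x₀ ∈ Ω
  swap
  · rw [hfr x₀ (by rw [hΩ.frontier_eq]; exact ⟨hx₀, hx₀Ω⟩), abs_zero,
      Real.zero_rpow (by positivity), mul_zero]
    exact ENNReal.toReal_nonneg
  have hux₀ : u x₀ ≤ 0 := by
    obtain ⟨y, hy⟩ :=
      nonempty_frontier_iff.2 ⟨hne, fun h => NormedSpace.unbounded_univ ℝ _ (h ▸ hb)⟩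
    exact (hmin (frontier_subset_closure hy)).trans (hfr y hy).le
  have hest := (ofReal_pow_mul_volume_le_volume_subgradImage_mul_volume hΩ hconv hb hu
    (fun y hy => (hfr y hy).ge) hx₀Ω (abs_nonneg (u x₀))
    (by rw [abs_of_nonpos hux₀, neg_neg])).trans
    (mul_le_mul_left (hMA Ω subset_rfl hΩ.measurableSet) _)
  have hfin : volume Ω ≠ ⊤ := hb.measure_lt_top.ne
  have hsq : |u x₀| ^ n * C ≤ (volume Ω).toReal ^ 2 := by
    simpa [ENNReal.toReal_ofReal, sq, C] using
      ENNReal.toReal_mono (ENNReal.mul_ne_top hfin hfin) hest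
  have hrpow : |u x₀| ^ ((n : ℝ) / 2) = √(|u x₀| ^ n) := by
    rw [Real.sqrt_eq_rpow, ← Real.rpow_natCast, ← Real.rpow_mul (abs_nonneg _)]
    ring_nf
  rw [hrpow, ← Real.sqrt_mul hC.le, Real.sqrt_le_left ENNReal.toReal_nonneg]
  linarith
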